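/- For every element t of a commutative ring and every natural number n, the sum over k from 0 to n of t^k * (Q_k + 2*(t-1) * P_{k+1}) equals 2 * t^{n+1} * P_{n+1}, where P and Q denote images in the ring of the Pell and Pell-Lucas numbers. -/
import Mathlib

def pell : ℕ → ℕ
  | 0 => 0
  | 1 => 1
  | n + 2 => 2 * pell (n + 1) + pell n

def pellLucas : ℕ → ℕ
  | 0 => 2
  | 1 => 2
  | n + 2 => 2 * pellLucas (n + 1) + pellLucas n

lemma pellLucas_eq (n : ℕ) : pellLucas (n + 1) = 2 * pell (n + 1) + 2 * pell n := by
  induction n using Nat.twoStepInduction with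
  | zero => rfl
  | one => rfl
  | more n ih1 ih2 =>
    have h1 : pellLucas (n + 3) = 2 * pellLucas (n + 2) + pellLucas (n + 1) := rfl
    have h2 : pell (n + 3) = 2 * pell (n + 2) + pell (n + 1) := rfl
    have h3 : pell (n + 2) = 2 * pell (n + 1) + pell n := rfl
    have ih2' : pellLucas (n + 2) = 2 * pell (n + 2) + 2 * pell (n + 1) := ih2
    show pellLucas (n + 3) = 2 * pell (n + 3) + 2 * pell (n + 2)
    omega

theorem pell_sury {R : Type*} [CommRing R] (t : R) (n : ℕ) :
    ∑ k ∈ Finset.range (n + 1),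
        t ^ k * ((pellLucas k : R) + 2 * (t - 1) * (pell (k + 1) : R)) =
      2 * t ^ (n + 1) * (pell (n + 1) : R) := by
  induction n with
  | zero => simp [pell, pellLucas]; ring
  | succ n ih =>
    rw [Finset.sum_range_succ, ih, pellLucas_eq]
    have hp : pell (n + 2) = 2 * pell (n + 1) + pell n := rfl
    rw [hp]
    push_cast
    ring
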